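/- arXiv:2506.09570 — 4 statements merged into one kernel-verified Lean document; each statement's English description precedes it below -/
import Mathlib

section
/- Let P be an L×L Hermitian positive definite complex matrix and M an L×N complex matrix. The function X ↦ log det(P + M X M^H), defined on the convex set of N×N Hermitian positive semidefinite complex matrices, is concave: for all Hermitian positive semidefinite X, Y and all t ∈ [0,1], log det(P + M(tX + (1−t)Y)M^H) ≥ t·log det(P + M X M^H) + (1−t)·log det(P + M Y M^H). -/
/-!
Write `A = S * Sᴴ` with `S` invertible and `B = S * C * Sᴴ`. Then
`det (a • A + b • B) = det A * det (a • 1 + b • C) = det A * ∏ i, (a + b * μ i)`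
over the eigenvalues `μ i ≥ 0` of `C`, and weighted AM–GM gives `μ i ^ b ≤ a + b * μ i`;
hence `det A ^ a * det B ^ b ≤ det (a • A + b • B)`, i.e. `log det` is concave on positive
definite matrices. The map `X ↦ P + M * X * Mᴴ` is affine and sends positive semidefinite
matrices to positive definite ones.
-/

open Matrix
open scoped ComplexOrder

namespace Matrix
open RCLike

variable {𝕜 n : Type*} [RCLike 𝕜]

lemma convex_setOf_posDef : Convex ℝ {A : Matrix n n 𝕜 | A.PosDef} :=
  convex_iff_forall_pos.2 fun _ hA _ hB _ _ ha hb _ => (hA.smul ha).add (hB.smul hb)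

variable [Fintype n] [DecidableEq n]

lemma IsHermitian.ofReal_re_det {A : Matrix n n 𝕜} (hA : A.IsHermitian) :
    ((re A.det : ℝ) : 𝕜) = A.det :=
  conj_eq_iff_re.mp (by rw [← star_def, ← det_conjTranspose, hA.eq])

lemma re_det_mul_mul_conjTranspose (S X : Matrix n n 𝕜) :
    re (S * X * Sᴴ).det = re (S * Sᴴ).det * re X.det := by
  rw [det_mul, det_mul, mul_right_comm, ← det_mul]
  conv_lhs => rw [← (isHermitian_mul_conjTranspose_self S).ofReal_re_det, re_ofReal_mul]

lemma PosSemidef.re_det_nonneg {A : Matrix n n 𝕜} (hA : A.PosSemidef) : 0 ≤ re A.det :=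
  (nonneg_iff.1 hA.det_nonneg).1

lemma PosDef.re_det_pos {A : Matrix n n 𝕜} (hA : A.PosDef) : 0 < re A.det :=
  (pos_iff.1 hA.det_pos).1

lemma IsHermitian.det_cfc {A : Matrix n n 𝕜} (hA : A.IsHermitian) (f : ℝ → ℝ) :
    (cfc f A).det = ∏ i, (f (hA.eigenvalues i) : 𝕜) := by
  rw [hA.cfc_eq, IsHermitian.cfc, det_map, det_diagonal]
  rfl

lemma IsHermitian.smul_one_add_smul_eq_cfc {A : Matrix n n 𝕜} (hA : A.IsHermitian) (a b : ℝ) :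
    a • (1 : Matrix n n 𝕜) + b • A = cfc (fun x => a + b * x) A := by
  rw [cfc_const_add _ _ _ (by fun_prop) hA.isSelfAdjoint, cfc_const_mul_id _ _ hA.isSelfAdjoint,
    Algebra.algebraMap_eq_smul_one]

lemma PosSemidef.re_det_rpow_le {C : Matrix n n 𝕜} (hC : C.PosSemidef) {a b : ℝ}
    (ha : 0 ≤ a) (hb : 0 ≤ b) (hab : a + b = 1) :
    re C.det ^ b ≤ re (a • 1 + b • C).det := by
  have hμ := hC.eigenvalues_nonneg
  rw [hC.1.det_eq_prod_eigenvalues, hC.1.smul_one_add_smul_eq_cfc, hC.1.det_cfc, ← ofReal_prod,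
    ← ofReal_prod, ofReal_re, ofReal_re, ← Real.finsetProd_rpow _ _ fun i _ => hμ i]
  refine Finset.prod_le_prod (fun i _ => Real.rpow_nonneg (hμ i) _) fun i _ => ?_
  simpa using Real.geom_mean_le_arith_mean2_weighted ha hb zero_le_one (hμ i) hab

open scoped MatrixOrder in
lemma PosDef.exists_isUnit_eq_mul_conjTranspose {A : Matrix n n 𝕜} (hA : A.PosDef) :
    ∃ S : Matrix n n 𝕜, IsUnit S ∧ A = S * Sᴴ := by
  refine ⟨CFC.sqrt A, (CFC.isUnit_sqrt_iff A hA.posSemidef.nonneg).2 hA.isUnit, ?_⟩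
  rw [(CFC.sqrt_nonneg A).posSemidef.1.eq, CFC.sqrt_mul_sqrt_self A hA.posSemidef.nonneg]

lemma PosDef.re_det_rpow_mul_rpow_le {A B : Matrix n n 𝕜} (hA : A.PosDef) (hB : B.PosSemidef)
    {a b : ℝ} (ha : 0 ≤ a) (hb : 0 ≤ b) (hab : a + b = 1) :
    re A.det ^ a * re B.det ^ b ≤ re (a • A + b • B).det := by
  obtain ⟨S, hS, rfl⟩ := hA.exists_isUnit_eq_mul_conjTranspose
  set C := S⁻¹ * B * Sᴴ⁻¹
  have hSCS : S * C * Sᴴ = B := by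
    have hdet : IsUnit S.det := (isUnit_iff_isUnit_det S).1 hS
    rw [mul_assoc, nonsing_inv_mul_cancel_right _ _ (by simpa using hdet.star),
      mul_nonsing_inv_cancel_left _ _ hdet]
  have hC : C.PosSemidef := hS.posSemidef_star_right_conjugate_iff.1 (hSCS ▸ hB)
  have hcomb : a • (S * Sᴴ) + b • B = S * (a • 1 + b • C) * Sᴴ := by
    rw [← hSCS]
    simp only [mul_add, add_mul, mul_smul_comm, smul_mul_assoc, mul_one]
  rw [hcomb, ← hSCS, re_det_mul_mul_conjTranspose, re_det_mul_mul_conjTranspose,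
    Real.mul_rpow hA.posSemidef.re_det_nonneg hC.re_det_nonneg, ← mul_assoc,
    ← Real.rpow_add hA.re_det_pos, hab, Real.rpow_one]
  exact mul_le_mul_of_nonneg_left (hC.re_det_rpow_le ha hb hab) hA.posSemidef.re_det_nonneg

lemma concaveOn_log_re_det :
    ConcaveOn ℝ {A : Matrix n n 𝕜 | A.PosDef} fun A => Real.log (re A.det) := by
  refine ⟨convex_setOf_posDef, fun A (hA : A.PosDef) B (hB : B.PosDef) a b ha hb hab => ?_⟩
  have hApos := hA.re_det_pos
  have hBpos := hB.re_det_pos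
  calc a • Real.log (re A.det) + b • Real.log (re B.det)
      = Real.log (re A.det ^ a * re B.det ^ b) := by
        rw [Real.log_mul (by positivity) (by positivity), Real.log_rpow hApos, Real.log_rpow hBpos,
          smul_eq_mul, smul_eq_mul]
    _ ≤ Real.log (re (a • A + b • B).det) :=
        Real.log_le_log (by positivity) (hA.re_det_rpow_mul_rpow_le hB.posSemidef ha hb hab)

end Matrix

/-- Concavity of `X ↦ log det (P + M X Mᴴ)` on Hermitian PSD matrices. -/
theorem logdet_concave_on_psd (L N : ℕ) (P : Matrix (Fin L) (Fin L) ℂ)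
    (M : Matrix (Fin L) (Fin N) ℂ) (hP : P.PosDef)
    (X Y : Matrix (Fin N) (Fin N) ℂ) (hX : X.PosSemidef) (hY : Y.PosSemidef)
    (t : ℝ) (ht0 : 0 ≤ t) (ht1 : t ≤ 1) :
    t * Real.log ((P + M * X * Mᴴ).det.re) + (1 - t) * Real.log ((P + M * Y * Mᴴ).det.re)
      ≤ Real.log ((P + M * (t • X + (1 - t) • Y) * Mᴴ).det.re) := by
  have hcomb : P + M * (t • X + (1 - t) • Y) * Mᴴ
      = t • (P + M * X * Mᴴ) + (1 - t) • (P + M * Y * Mᴴ) := by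
    rw [Matrix.mul_add, Matrix.add_mul, Matrix.mul_smul, Matrix.mul_smul, Matrix.smul_mul,
      Matrix.smul_mul]
    module
  rw [hcomb]
  exact concaveOn_log_re_det.2 (hP.add_posSemidef (hX.mul_mul_conjTranspose_same M))
    (hP.add_posSemidef (hY.mul_mul_conjTranspose_same M)) ht0 (sub_nonneg.2 ht1)
    (add_sub_cancel t 1)
end

section
/- (Optimal Lorentzian phase for one coordinate, equations (21)–(23).) Let D be an N×N Hermitian complex matrix, c ∈ ℂ^N, and define f(q) = Re(q^H D q) − 2 Re(q^H c) for q ∈ ℂ^N. Fix an index n and fix the entries q_m for all m ≠ n, and define η_n = c_n − Σ_{m≠n} D_{n,m}·q_m − (i/2)·D_{n,n} ∈ ℂ. For θ ∈ ℝ, let q(θ) be the vector obtained from q by replacing its n-th entry with (i + e^{iθ})/2. Then for every θ ∈ ℝ, f(q(θ*)) ≤ f(q(θ)), where θ* = arg(η_n); that is, over the Lorentzian set 𝒬 = { (i + e^{iθ})/2 : θ ∈ [0, 2π] }, the coordinate-restricted objective is minimized at q_n = (i + e^{i·arg(η_n)})/2. -/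
open Matrix
open scoped ComplexConjugate BigOperators

/-!
Writing `q = u + eₙ w` with `uₙ = 0`, the objective is `f(u) + D_{nn}|w|² - 2 Re(w̄ bₙ)` with
`bₙ = cₙ - Σ_{m≠n} D_{nm} q_m`, because `D` is Hermitian and so `D_{nn}` is real. For
`w = (i + e^{iθ})/2` one has `|w|² = (1 + Im e^{iθ})/2`, and the `θ`-dependent part collapses to
`-Re(e^{-iθ} η)` with `η = bₙ - (i/2) D_{nn}`; this is at least `-‖η‖`, with equality when
`e^{iθ}` points along `η`, i.e. at `θ = arg η`.
-/

open Complex Function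

noncomputable section

def quadraticObjective {ι : Type*} [Fintype ι] (D : Matrix ι ι ℂ) (c v : ι → ℂ) : ℝ :=
  (∑ i, ∑ j, conj (v i) * D i j * v j).re - 2 * (∑ i, conj (v i) * c i).re

def lorentzianWeight (θ : ℝ) : ℂ := (I + exp (I * θ)) / 2

def lorentzianCost (d : ℝ) (b : ℂ) (θ : ℝ) : ℝ :=
  d * normSq (lorentzianWeight θ) - 2 * (conj (lorentzianWeight θ) * b).re

lemma update_eq_update_zero_add_single {ι M : Type*} [DecidableEq ι] [AddZeroClass M]
    (q : ι → M) (n : ι) (w : M) :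
    update q n w = update q n 0 + Pi.single n w := by
  ext m
  rcases eq_or_ne m n with rfl | hm <;> simp [*]

lemma Matrix.IsHermitian.star_dotProduct_mulVec_comm {ι R : Type*} [Fintype ι] [CommSemiring R]
    [StarRing R] {D : Matrix ι ι R} (hD : D.IsHermitian) (u v : ι → R) :
    star u ⬝ᵥ D *ᵥ v = conj (star v ⬝ᵥ D *ᵥ u) := by
  rw [star_dotProduct, star_mulVec, hD.eq, ← dotProduct_mulVec]
  rfl

section QuadraticObjective

variable {ι : Type*} [Fintype ι] {D : Matrix ι ι ℂ}

lemma quadraticObjective_eq_dotProduct (D : Matrix ι ι ℂ) (c v : ι → ℂ) :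
    quadraticObjective D c v = (star v ⬝ᵥ D *ᵥ v).re - 2 * (star v ⬝ᵥ c).re := by
  simp only [quadraticObjective, dotProduct, mulVec, Finset.mul_sum, mul_assoc, Pi.star_apply,
    RCLike.star_def]

lemma quadraticObjective_add (hD : D.IsHermitian) (c u v : ι → ℂ) :
    quadraticObjective D c (u + v)
      = quadraticObjective D c u + quadraticObjective D c v + 2 * (star v ⬝ᵥ D *ᵥ u).re := by
  simp only [quadraticObjective_eq_dotProduct, star_add, mulVec_add, add_dotProduct,
    dotProduct_add, hD.star_dotProduct_mulVec_comm u v, add_re, conj_re]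
  ring

variable [DecidableEq ι]

lemma quadraticObjective_single (hD : D.IsHermitian) (c : ι → ℂ) (n : ι) (w : ℂ) :
    quadraticObjective D c (Pi.single n w) = (D n n).re * normSq w - 2 * (conj w * c n).re := by
  rw [quadraticObjective_eq_dotProduct, ← Pi.single_star, single_dotProduct, single_dotProduct,
    mulVec_single]
  simp only [Pi.smul_apply, col_apply, MulOpposite.smul_eq_mul_unop, MulOpposite.unop_op,
    star_def]
  have hdiag : (D n n).im = 0 := by simpa using congrArg im (hD.coe_re_apply_self n).symm
  simp only [mul_re, mul_im, conj_re, conj_im, normSq_apply, hdiag]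
  ring

lemma mulVec_update_zero_apply_self (D : Matrix ι ι ℂ) (q : ι → ℂ) (n : ι) :
    (D *ᵥ update q n 0) n = ∑ m ∈ Finset.univ.erase n, D n m * q m := by
  rw [mulVec, dotProduct, ← Finset.sum_erase _ (a := n) (by simp)]
  exact Finset.sum_congr rfl fun m hm => by rw [update_of_ne (Finset.ne_of_mem_erase hm)]

lemma quadraticObjective_update (hD : D.IsHermitian) (c q : ι → ℂ) (n : ι) (θ : ℝ) :
    quadraticObjective D c (update q n (lorentzianWeight θ))
      = quadraticObjective D c (update q n 0)
        + lorentzianCost (D n n).re (c n - ∑ m ∈ Finset.univ.erase n, D n m * q m) θ := by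
  rw [update_eq_update_zero_add_single, quadraticObjective_add hD, quadraticObjective_single hD,
    ← Pi.single_star, single_dotProduct, mulVec_update_zero_apply_self, lorentzianCost]
  simp only [mul_sub, sub_re, star_def]
  ring

end QuadraticObjective

lemma lorentzianCost_eq (d : ℝ) (b : ℂ) (θ : ℝ) :
    lorentzianCost d b θ = d / 2 - b.im - (conj (exp (I * θ)) * (b - I / 2 * d)).re := by
  simp only [lorentzianCost, lorentzianWeight, mul_comm I, normSq_apply, map_div₀, map_add,
    conj_I, map_ofNat, mul_re, mul_im, add_re, add_im, sub_re, sub_im, div_re, div_im, conj_re,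
    conj_im, I_re, I_im, ofReal_re, ofReal_im, exp_ofReal_mul_I_re, exp_ofReal_mul_I_im,
    re_ofNat, im_ofNat, neg_re, neg_im]
  linear_combination (d / 4) * Real.sin_sq_add_cos_sq θ

lemma re_conj_exp_I_mul_le_norm (η : ℂ) (θ : ℝ) : (conj (exp (I * θ)) * η).re ≤ ‖η‖ :=
  calc (conj (exp (I * θ)) * η).re ≤ ‖conj (exp (I * θ)) * η‖ := re_le_norm _
    _ = ‖η‖ := by rw [norm_mul, norm_conj, norm_exp_I_mul_ofReal, one_mul]

lemma re_conj_exp_I_mul_arg (η : ℂ) : (conj (exp (I * arg η)) * η).re = ‖η‖ := by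
  have hpolar : ‖η‖ * exp (I * arg η) = η := by rw [mul_comm I, norm_mul_exp_arg_mul_I]
  calc (conj (exp (I * arg η)) * η).re
      = (‖η‖ * (conj (exp (I * arg η)) * exp (I * arg η))).re := by rw [mul_left_comm, hpolar]
    _ = ‖η‖ := by rw [conj_mul', norm_exp_I_mul_ofReal]; simp

lemma lorentzianCost_arg_le (d : ℝ) (b : ℂ) (θ : ℝ) :
    lorentzianCost d b (arg (b - I / 2 * d)) ≤ lorentzianCost d b θ := by
  rw [lorentzianCost_eq, lorentzianCost_eq, re_conj_exp_I_mul_arg]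
  linarith [re_conj_exp_I_mul_le_norm (b - I / 2 * d) θ]

end

/-- Optimal Lorentzian phase for one coordinate (equations (21)–(23)): with
`f(q) = Re(qᴴ D q) - 2 Re(qᴴ c)`, `D` Hermitian, and
`η = c n - Σ_{m≠n} D n m * q m - (i/2) D n n`, the coordinate-restricted objective over the
Lorentzian set `{(i + e^{iθ})/2 : θ ∈ ℝ}` is minimized at `θ* = arg η`. -/
theorem lorentzian_phase_optimality (N : ℕ) (D : Matrix (Fin N) (Fin N) ℂ)
    (hD : D.IsHermitian) (c : Fin N → ℂ) (q : Fin N → ℂ) (n : Fin N) :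
    ∀ θ : ℝ,
      (fun v : Fin N → ℂ =>
          (∑ i, ∑ j, conj (v i) * D i j * v j).re - 2 * (∑ i, conj (v i) * c i).re)
        (Function.update q n ((Complex.I + Complex.exp (Complex.I *
          (Complex.arg (c n - (∑ m ∈ Finset.univ.erase n, D n m * q m)
            - (Complex.I / 2) * D n n) : ℝ))) / 2))
      ≤ (fun v : Fin N → ℂ =>
          (∑ i, ∑ j, conj (v i) * D i j * v j).re - 2 * (∑ i, conj (v i) * c i).re)
        (Function.update q n ((Complex.I + Complex.exp (Complex.I * (θ : ℂ))) / 2)) := by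
  intro θ
  change quadraticObjective D c (update q n (lorentzianWeight _))
    ≤ quadraticObjective D c (update q n (lorentzianWeight θ))
  have hopt := lorentzianCost_arg_le (D n n).re (c n - ∑ m ∈ Finset.univ.erase n, D n m * q m) θ
  have hdiag : ((D n n).re : ℂ) = D n n := hD.coe_re_apply_self n
  rw [hdiag] at hopt
  rw [quadraticObjective_update hD, quadraticObjective_update hD]
  exact add_le_add_right hopt _
end

section
/- (Per-user fractional-programming identity underlying Theorem 3/Theorem 4.) Let m, K be positive integers, u_1, …, u_K ∈ ℂ^m, N > 0 a real number, and fix k ∈ {1,…,K}. For ρ > −1 and γ ∈ ℂ^m define F(ρ, γ) = log(1 + ρ) − ρ + (1 + ρ)·[ 2 Re(γ^H u_k) − (Σ_{i=1}^K ‖u_i‖² + N)·‖γ‖² ]. Then F(ρ, γ) ≤ log(1 + ‖u_k‖²/(Σ_{i≠k} ‖u_i‖² + N)) for all ρ > −1 and γ ∈ ℂ^m, with equality if and only if γ = u_k/(Σ_{i=1}^K ‖u_i‖² + N) and ρ = ‖u_k‖²/(Σ_{i≠k} ‖u_i‖² + N). -/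
/-!
Completing the square in `γ` writes the objective as the Lagrangian dual transform
`log (1 + ρ) - ρ + (1 + ρ) s / (1 + s)` of the SINR `s = ‖u_k‖² / D` minus the penalty
`(1 + ρ) (‖u_k‖² + D) ‖γ - u_k / (‖u_k‖² + D)‖² ≥ 0`.  With `t = (1 + ρ) / (1 + s)` the dual
transform equals `log (1 + s) + log t - (t - 1)`, so `log t ≤ t - 1` bounds it by `log (1 + s)`,
with equality exactly at `t = 1`.
-/

open Real
open scoped ComplexConjugate RealInnerProductSpace

noncomputable def lagrangianDualTransform (s ρ : ℝ) : ℝ :=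
  log (1 + ρ) - ρ + (1 + ρ) * (s / (1 + s))

lemma lagrangianDualTransform_eq_log_add {s ρ : ℝ} (hs : -1 < s) (hρ : -1 < ρ) :
    lagrangianDualTransform s ρ
      = log (1 + s) + (log ((1 + ρ) / (1 + s)) - ((1 + ρ) / (1 + s) - 1)) := by
  have hs' : 0 < 1 + s := by linarith
  have hρ' : 0 < 1 + ρ := by linarith
  rw [lagrangianDualTransform, log_div hρ'.ne' hs'.ne']
  field_simp
  ring

lemma lagrangianDualTransform_le {s ρ : ℝ} (hs : -1 < s) (hρ : -1 < ρ) :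
    lagrangianDualTransform s ρ ≤ log (1 + s) := by
  have ht : 0 < (1 + ρ) / (1 + s) := div_pos (by linarith) (by linarith)
  rw [lagrangianDualTransform_eq_log_add hs hρ]
  linarith [log_le_sub_one_of_pos ht]

lemma lagrangianDualTransform_eq_log_iff {s ρ : ℝ} (hs : -1 < s) (hρ : -1 < ρ) :
    lagrangianDualTransform s ρ = log (1 + s) ↔ ρ = s := by
  have hs' : 0 < 1 + s := by linarith
  have ht : 0 < (1 + ρ) / (1 + s) := div_pos (by linarith) hs'
  rw [lagrangianDualTransform_eq_log_add hs hρ]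
  constructor
  · intro h
    by_contra hne
    have ht1 : (1 + ρ) / (1 + s) ≠ 1 := by
      rw [ne_eq, div_eq_one_iff_eq hs'.ne']
      contrapose! hne
      linarith
    linarith [log_lt_sub_one_of_pos ht ht1]
  · rintro rfl
    rw [div_self hs'.ne', log_one]
    ring

section InnerProductSpace

variable {E : Type*} [NormedAddCommGroup E] [InnerProductSpace ℝ E]

lemma two_mul_inner_sub_mul_norm_sq (γ v : E) {T : ℝ} (hT : T ≠ 0) :
    2 * ⟪γ, v⟫ - T * ‖γ‖ ^ 2 = ‖v‖ ^ 2 / T - T * ‖γ - T⁻¹ • v‖ ^ 2 := by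
  rw [@norm_sub_sq ℝ, real_inner_smul_right, norm_smul, mul_pow, Real.norm_eq_abs, sq_abs]
  simp only [RCLike.re_to_real]
  field_simp
  ring

/-- `D` stands for the interference-plus-noise power `∑_{i ≠ k} ‖uᵢ‖² + N`. -/
noncomputable def fpObjective (v γ : E) (D ρ : ℝ) : ℝ :=
  log (1 + ρ) - ρ + (1 + ρ) * (2 * ⟪γ, v⟫ - (‖v‖ ^ 2 + D) * ‖γ‖ ^ 2)

lemma fpObjective_eq (v γ : E) {D : ℝ} (hD : 0 < D) (ρ : ℝ) :
    fpObjective v γ D ρ = lagrangianDualTransform (‖v‖ ^ 2 / D) ρ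
      - (1 + ρ) * (‖v‖ ^ 2 + D) * ‖γ - (‖v‖ ^ 2 + D)⁻¹ • v‖ ^ 2 := by
  have hT : 0 < ‖v‖ ^ 2 + D := by positivity
  rw [fpObjective, two_mul_inner_sub_mul_norm_sq γ v hT.ne', lagrangianDualTransform]
  field_simp
  ring

lemma fpObjective_le (v γ : E) {D ρ : ℝ} (hD : 0 < D) (hρ : -1 < ρ) :
    fpObjective v γ D ρ ≤ log (1 + ‖v‖ ^ 2 / D) := by
  have hs : -1 < ‖v‖ ^ 2 / D := by linarith [show 0 ≤ ‖v‖ ^ 2 / D by positivity]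
  have hpen : 0 ≤ (1 + ρ) * (‖v‖ ^ 2 + D) * ‖γ - (‖v‖ ^ 2 + D)⁻¹ • v‖ ^ 2 := by
    have : 0 < 1 + ρ := by linarith
    positivity
  rw [fpObjective_eq v γ hD]
  linarith [lagrangianDualTransform_le hs hρ]

lemma fpObjective_eq_log_iff (v γ : E) {D ρ : ℝ} (hD : 0 < D) (hρ : -1 < ρ) :
    fpObjective v γ D ρ = log (1 + ‖v‖ ^ 2 / D)
      ↔ γ = (‖v‖ ^ 2 + D)⁻¹ • v ∧ ρ = ‖v‖ ^ 2 / D := by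
  have hs : -1 < ‖v‖ ^ 2 / D := by linarith [show 0 ≤ ‖v‖ ^ 2 / D by positivity]
  have hw : 0 < (1 + ρ) * (‖v‖ ^ 2 + D) := mul_pos (by linarith) (by positivity)
  have hpen_eq_zero : (1 + ρ) * (‖v‖ ^ 2 + D) * ‖γ - (‖v‖ ^ 2 + D)⁻¹ • v‖ ^ 2 = 0
      ↔ γ = (‖v‖ ^ 2 + D)⁻¹ • v := by
    rw [mul_eq_zero_iff_left hw.ne', pow_eq_zero_iff two_ne_zero, norm_eq_zero, sub_eq_zero]
  have hpen := mul_nonneg hw.le (sq_nonneg ‖γ - (‖v‖ ^ 2 + D)⁻¹ • v‖)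
  have hle := lagrangianDualTransform_le hs hρ
  rw [fpObjective_eq v γ hD, ← hpen_eq_zero, ← lagrangianDualTransform_eq_log_iff hs hρ]
  constructor
  · intro h
    constructor <;> linarith
  · rintro ⟨h₁, h₂⟩
    rw [h₁, h₂, sub_zero]

end InnerProductSpace

/-- Per-user fractional-programming identity underlying Theorems 3/4: with
`F(ρ,γ) = log(1+ρ) - ρ + (1+ρ)[2 Re(γᴴ u_k) - (Σᵢ‖uᵢ‖² + N)‖γ‖²]`, one has
`F(ρ,γ) ≤ log(1 + ‖u_k‖²/(Σ_{i≠k}‖uᵢ‖² + N))`, with equality iff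
`γ = u_k/(Σᵢ‖uᵢ‖² + N)` and `ρ = ‖u_k‖²/(Σ_{i≠k}‖uᵢ‖² + N)`. -/
theorem per_user_fp_identity (m K : ℕ) (u : Fin K → Fin m → ℂ) (N : ℝ) (hN : 0 < N)
    (k : Fin K) :
    ∀ (ρ : ℝ), -1 < ρ → ∀ γ : Fin m → ℂ,
      (Real.log (1 + ρ) - ρ + (1 + ρ) *
          (2 * (∑ n, conj (γ n) * u k n).re
            - ((∑ i, ∑ n, ‖u i n‖ ^ 2) + N) * ∑ n, ‖γ n‖ ^ 2)
        ≤ Real.log (1 + (∑ n, ‖u k n‖ ^ 2)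
            / ((∑ i ∈ Finset.univ.erase k, ∑ n, ‖u i n‖ ^ 2) + N))) ∧
      (Real.log (1 + ρ) - ρ + (1 + ρ) *
          (2 * (∑ n, conj (γ n) * u k n).re
            - ((∑ i, ∑ n, ‖u i n‖ ^ 2) + N) * ∑ n, ‖γ n‖ ^ 2)
        = Real.log (1 + (∑ n, ‖u k n‖ ^ 2)
            / ((∑ i ∈ Finset.univ.erase k, ∑ n, ‖u i n‖ ^ 2) + N))
       ↔ (γ = fun n => u k n / ((((∑ i, ∑ n, ‖u i n‖ ^ 2) + N : ℝ)) : ℂ)) ∧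
         ρ = (∑ n, ‖u k n‖ ^ 2)
            / ((∑ i ∈ Finset.univ.erase k, ∑ n, ‖u i n‖ ^ 2) + N)) := by
  intro ρ hρ γ
  set v : EuclideanSpace ℂ (Fin m) := WithLp.toLp 2 (u k)
  set g : EuclideanSpace ℂ (Fin m) := WithLp.toLp 2 γ
  set D := (∑ i ∈ Finset.univ.erase k, ∑ n, ‖u i n‖ ^ 2) + N
  have hD : 0 < D := by positivity
  have hv : ∑ n, ‖u k n‖ ^ 2 = ‖v‖ ^ 2 := (EuclideanSpace.norm_sq_eq v).symm
  have hg : ∑ n, ‖γ n‖ ^ 2 = ‖g‖ ^ 2 := (EuclideanSpace.norm_sq_eq g).symm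
  have hinner : (∑ n, conj (γ n) * u k n).re = ⟪g, v⟫ := by
    simp [real_inner_eq_re_inner ℂ, PiLp.inner_apply, g, v, mul_comm]
  have htotal : (∑ i, ∑ n, ‖u i n‖ ^ 2) + N = ‖v‖ ^ 2 + D := by
    rw [← Finset.add_sum_erase _ _ (Finset.mem_univ k), hv, add_assoc]
  have hmax : (γ = fun n => u k n / ((‖v‖ ^ 2 + D : ℝ) : ℂ)) ↔ g = (‖v‖ ^ 2 + D)⁻¹ • v := by
    rw [← WithLp.toLp_smul, (WithLp.toLp_injective 2).eq_iff, funext_iff, funext_iff]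
    simp [Complex.real_smul, div_eq_inv_mul]
  rw [hinner, hg, hv, htotal, hmax]
  exact ⟨fpObjective_le v g hD hρ, fpObjective_eq_log_iff v g hD hρ⟩
end

section
/- (Theorem 4, pointwise form: equivalence of the downlink problem and its FP reformulation.) Let H be an N×N complex matrix, and for k = 1,…,K let G̃_k be an N×M complex matrix and N_k > 0. Let Q be an N×L complex matrix and W = [w_1, …, w_K] an L×K complex matrix. Define R̃_d(Q, W) = Σ_{k=1}^K log(1 + ‖G̃_k^H H Q w_k‖² / (Σ_{i≠k} ‖G̃_k^H H Q w_i‖² + N_k)), and for ρ = (ρ_1,…,ρ_K) with each ρ_k > −1 and Γ = (γ_1,…,γ_K) with γ_k ∈ ℂ^M, define F_1(Q, W, ρ, Γ) = Σ_{k=1}^K [ log(1 + ρ_k) − ρ_k + (1 + ρ_k)·𝒜_k ] where 𝒜_k = 2 Re(γ_k^H G̃_k^H H Q w_k) − (Σ_{i=1}^K ‖G̃_k^H H Q w_i‖² + N_k)·‖γ_k‖². Then F_1(Q, W, ρ, Γ) ≤ R̃_d(Q, W) for all admissible (ρ, Γ), with equality if and only if for every k, γ_k = (Σ_{i=1}^K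 ‖G̃_k^H H Q w_i‖² + N_k)^{-1}·G̃_k^H H Q w_k and ρ_k = ‖G̃_k^H H Q w_k‖² / (Σ_{i≠k} ‖G̃_k^H H Q w_i‖² + N_k). In particular, the supremum of F_1 over (ρ, Γ) equals R̃_d(Q, W), so the two optimization problems have the same optimal value and the same optimal (Q, W) over any constraint set on (Q, W). -/
open Matrix
open scoped ComplexConjugate BigOperators

/-!
Both auxiliary variables enter through concave maximisations solved in closed form. For the quadratic
transform, `2 Re⟪γ, u⟫ - T‖γ‖² = (‖u‖² - ‖Tγ - u‖²) / T ≤ ‖u‖² / T`, with equality iff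
`γ = u / T`; with `T = ‖u‖² + d` the bound is `x / (1 + x)` for the SINR `x = ‖u‖² / d`. For the
Lagrangian dual transform, with `t = (1 + ρ) / (1 + x)`,
`log (1 + ρ) - ρ + (1 + ρ) x / (1 + x) = log (1 + x) + (log t - t + 1) ≤ log (1 + x)`,
with equality iff `t = 1`, i.e. `ρ = x`. Since `1 + ρ > 0`, the summand of `F₁` is increasing in
`𝒜ₖ`, so the two bounds chain; summing over users, equality holds iff it holds for every user.
-/

theorem eq_iff_eq_and_eq_of_le_of_le {α : Type*} [PartialOrder α] {a b c : α} (hab : a ≤ b)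
    (hbc : b ≤ c) : a = c ↔ a = b ∧ b = c :=
  ⟨fun h => ⟨hab.antisymm (h ▸ hbc), hbc.antisymm (h ▸ hab)⟩, fun h => h.1.trans h.2⟩

theorem Real.log_eq_sub_one_iff {x : ℝ} (hx : 0 < x) : Real.log x = x - 1 ↔ x = 1 := by
  refine ⟨fun h => ?_, fun h => by simp [h]⟩
  by_contra hne
  exact (Real.log_lt_sub_one_of_pos hx hne).ne h

namespace FractionalProgramming

open Real RCLike

/-- The `k`-th summand of `F₁`, as a function of `ρₖ` and `𝒜ₖ`. -/
noncomputable def lagrangianDualTerm (ρ a : ℝ) : ℝ := log (1 + ρ) - ρ + (1 + ρ) * a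

theorem lagrangianDualTerm_strictMono {ρ : ℝ} (hρ : -1 < ρ) :
    StrictMono (lagrangianDualTerm ρ) := fun a b hab => by
  unfold lagrangianDualTerm
  nlinarith

theorem lagrangianDualTerm_div_one_add {ρ x : ℝ} (hρ : -1 < ρ) (hx : -1 < x) :
    lagrangianDualTerm ρ (x / (1 + x)) =
      log (1 + x) + (log ((1 + ρ) / (1 + x)) - ((1 + ρ) / (1 + x) - 1)) := by
  have hx' : 1 + x ≠ 0 := by linarith
  rw [lagrangianDualTerm, log_div (by linarith) hx']
  field_simp
  ring

theorem lagrangianDualTerm_le {ρ x : ℝ} (hρ : -1 < ρ) (hx : -1 < x) :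
    lagrangianDualTerm ρ (x / (1 + x)) ≤ log (1 + x) := by
  rw [lagrangianDualTerm_div_one_add hρ hx]
  have ht : 0 < (1 + ρ) / (1 + x) := div_pos (by linarith) (by linarith)
  linarith [log_le_sub_one_of_pos ht]

theorem lagrangianDualTerm_eq_iff {ρ x : ℝ} (hρ : -1 < ρ) (hx : -1 < x) :
    lagrangianDualTerm ρ (x / (1 + x)) = log (1 + x) ↔ ρ = x := by
  have ht : 0 < (1 + ρ) / (1 + x) := div_pos (by linarith) (by linarith)
  rw [lagrangianDualTerm_div_one_add hρ hx, add_eq_left, sub_eq_zero, log_eq_sub_one_iff ht,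
    div_eq_one_iff_eq (by linarith), add_right_inj]

variable {𝕜 E : Type*} [RCLike 𝕜] [NormedAddCommGroup E] [InnerProductSpace 𝕜 E]

local notation "⟪" x ", " y "⟫" => inner 𝕜 x y

theorem quadratic_transform_eq {T : ℝ} (hT : T ≠ 0) (γ u : E) :
    2 * re ⟪γ, u⟫ - T * ‖γ‖ ^ 2 = (‖u‖ ^ 2 - ‖(T : 𝕜) • γ - u‖ ^ 2) / T := by
  rw [eq_div_iff hT, norm_sub_sq (𝕜 := 𝕜), norm_smul, inner_smul_left, conj_ofReal, re_ofReal_mul,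
    norm_ofReal, mul_pow, sq_abs]
  ring

theorem quadratic_transform_le {T : ℝ} (hT : 0 < T) (γ u : E) :
    2 * re ⟪γ, u⟫ - T * ‖γ‖ ^ 2 ≤ ‖u‖ ^ 2 / T := by
  rw [quadratic_transform_eq hT.ne']
  gcongr
  exact sub_le_self _ (sq_nonneg _)

theorem quadratic_transform_eq_iff {T : ℝ} (hT : T ≠ 0) (γ u : E) :
    2 * re ⟪γ, u⟫ - T * ‖γ‖ ^ 2 = ‖u‖ ^ 2 / T ↔ γ = (T : 𝕜)⁻¹ • u := by
  rw [quadratic_transform_eq hT, div_left_inj' hT, sub_eq_self, sq_eq_zero_iff, norm_eq_zero,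
    sub_eq_zero, eq_inv_smul_iff₀ (ofReal_ne_zero.mpr hT)]

theorem lagrangianDualTerm_quadratic_le {d ρ : ℝ} (hd : 0 < d) (hρ : -1 < ρ) (γ u : E) :
    lagrangianDualTerm ρ (2 * re ⟪γ, u⟫ - (‖u‖ ^ 2 + d) * ‖γ‖ ^ 2) ≤ log (1 + ‖u‖ ^ 2 / d) := by
  have hx : -1 < ‖u‖ ^ 2 / d := by linarith [div_nonneg (sq_nonneg ‖u‖) hd.le]
  calc lagrangianDualTerm ρ (2 * re ⟪γ, u⟫ - (‖u‖ ^ 2 + d) * ‖γ‖ ^ 2)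
      ≤ lagrangianDualTerm ρ (‖u‖ ^ 2 / (‖u‖ ^ 2 + d)) :=
        (lagrangianDualTerm_strictMono hρ).monotone (quadratic_transform_le (by positivity) γ u)
    _ = lagrangianDualTerm ρ (‖u‖ ^ 2 / d / (1 + ‖u‖ ^ 2 / d)) := by
        congr 1; field_simp; ring
    _ ≤ log (1 + ‖u‖ ^ 2 / d) := lagrangianDualTerm_le hρ hx

theorem lagrangianDualTerm_quadratic_eq_iff {d ρ : ℝ} (hd : 0 < d) (hρ : -1 < ρ) (γ u : E) :
    lagrangianDualTerm ρ (2 * re ⟪γ, u⟫ - (‖u‖ ^ 2 + d) * ‖γ‖ ^ 2) = log (1 + ‖u‖ ^ 2 / d) ↔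
      γ = ((‖u‖ ^ 2 + d : ℝ) : 𝕜)⁻¹ • u ∧ ρ = ‖u‖ ^ 2 / d := by
  have hx : -1 < ‖u‖ ^ 2 / d := by linarith [div_nonneg (sq_nonneg ‖u‖) hd.le]
  have hT : 0 < ‖u‖ ^ 2 + d := by positivity
  have hmid : ‖u‖ ^ 2 / (‖u‖ ^ 2 + d) = ‖u‖ ^ 2 / d / (1 + ‖u‖ ^ 2 / d) := by field_simp; ring
  have h₁ := (lagrangianDualTerm_strictMono hρ).monotone (quadratic_transform_le (𝕜 := 𝕜) hT γ u)
  have h₂ := lagrangianDualTerm_le hρ hx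
  rw [← hmid] at h₂
  rw [eq_iff_eq_and_eq_of_le_of_le h₁ h₂, (lagrangianDualTerm_strictMono hρ).injective.eq_iff,
    quadratic_transform_eq_iff hT.ne', hmid, lagrangianDualTerm_eq_iff hρ hx]

section Coordinates

variable {ι : Type*} [Fintype ι]

theorem inner_toLp_toLp_eq_sum (x y : ι → 𝕜) :
    ⟪WithLp.toLp 2 x, WithLp.toLp 2 y⟫ = ∑ j, conj (x j) * y j := by
  simp only [EuclideanSpace.inner_toLp_toLp, dotProduct, Pi.star_apply, RCLike.star_def, mul_comm]

theorem norm_toLp_sq (x : ι → 𝕜) : ‖WithLp.toLp 2 x‖ ^ 2 = ∑ j, ‖x j‖ ^ 2 :=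
  EuclideanSpace.norm_sq_eq _

theorem lagrangianDualTerm_quadratic_le_pi {d ρ : ℝ} (hd : 0 < d) (hρ : -1 < ρ) (γ u : ι → 𝕜) :
    lagrangianDualTerm ρ
        (2 * re (∑ j, conj (γ j) * u j) - ((∑ j, ‖u j‖ ^ 2) + d) * ∑ j, ‖γ j‖ ^ 2) ≤
      log (1 + (∑ j, ‖u j‖ ^ 2) / d) := by
  simpa only [inner_toLp_toLp_eq_sum, norm_toLp_sq] using
    lagrangianDualTerm_quadratic_le (𝕜 := 𝕜) hd hρ (WithLp.toLp 2 γ) (WithLp.toLp 2 u)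

theorem lagrangianDualTerm_quadratic_eq_iff_pi {d ρ : ℝ} (hd : 0 < d) (hρ : -1 < ρ)
    (γ u : ι → 𝕜) :
    lagrangianDualTerm ρ
        (2 * re (∑ j, conj (γ j) * u j) - ((∑ j, ‖u j‖ ^ 2) + d) * ∑ j, ‖γ j‖ ^ 2) =
        log (1 + (∑ j, ‖u j‖ ^ 2) / d) ↔
      γ = (fun j => u j / (((∑ j, ‖u j‖ ^ 2) + d : ℝ) : 𝕜)) ∧ ρ = (∑ j, ‖u j‖ ^ 2) / d := by
  have h := lagrangianDualTerm_quadratic_eq_iff (𝕜 := 𝕜) hd hρ (WithLp.toLp 2 γ) (WithLp.toLp 2 u)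
  simp only [inner_toLp_toLp_eq_sum, norm_toLp_sq, ← WithLp.toLp_smul,
    (WithLp.toLp_injective 2).eq_iff] at h
  rw [h]
  simp only [div_eq_inv_mul]
  rfl

end Coordinates

end FractionalProgramming

open FractionalProgramming

/-- Theorem 4 (pointwise form): equivalence of the downlink problem and its
fractional-programming reformulation. With `u k i = G̃ₖᴴ H Q wᵢ`, the FP surrogate `F₁`
satisfies `F₁(Q,W,ρ,Γ) ≤ R̃_d(Q,W)` for all admissible `(ρ,Γ)`, with equality iff the
auxiliary variables take their optimal values; in particular the supremum of `F₁` over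
`(ρ,Γ)` is attained and equals `R̃_d(Q,W)`. -/
theorem downlink_fp_equivalence (N L M K : ℕ) (H : Matrix (Fin N) (Fin N) ℂ)
    (Gt : Fin K → Matrix (Fin N) (Fin M) ℂ) (Nk : Fin K → ℝ) (hNk : ∀ k, 0 < Nk k)
    (Q : Matrix (Fin N) (Fin L) ℂ) (w : Fin K → Fin L → ℂ) :
    let u : Fin K → Fin K → Fin M → ℂ := fun k i => ((Gt k)ᴴ * H * Q).mulVec (w i)
    let Rd : ℝ := ∑ k, Real.log (1 + (∑ j, ‖u k k j‖ ^ 2)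
        / ((∑ i ∈ Finset.univ.erase k, ∑ j, ‖u k i j‖ ^ 2) + Nk k))
    let F1 : (Fin K → ℝ) → (Fin K → Fin M → ℂ) → ℝ := fun ρ Γ =>
      ∑ k, (Real.log (1 + ρ k) - ρ k + (1 + ρ k) *
        (2 * (∑ j, conj (Γ k j) * u k k j).re
          - ((∑ i, ∑ j, ‖u k i j‖ ^ 2) + Nk k)
            * ∑ j, ‖Γ k j‖ ^ 2))
    (∀ (ρ : Fin K → ℝ) (Γ : Fin K → Fin M → ℂ), (∀ k, -1 < ρ k) → F1 ρ Γ ≤ Rd) ∧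
    (∀ (ρ : Fin K → ℝ) (Γ : Fin K → Fin M → ℂ), (∀ k, -1 < ρ k) →
      (F1 ρ Γ = Rd ↔ ∀ k,
        (Γ k = fun j =>
          u k k j / ((((∑ i, ∑ j, ‖u k i j‖ ^ 2) + Nk k : ℝ)) : ℂ)) ∧
        ρ k = (∑ j, ‖u k k j‖ ^ 2)
          / ((∑ i ∈ Finset.univ.erase k, ∑ j, ‖u k i j‖ ^ 2) + Nk k))) ∧
    (∃ (ρ : Fin K → ℝ) (Γ : Fin K → Fin M → ℂ), (∀ k, -1 < ρ k) ∧ F1 ρ Γ = Rd) := by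
  intro u Rd F1
  set d : Fin K → ℝ := fun k => (∑ i ∈ Finset.univ.erase k, ∑ j, ‖u k i j‖ ^ 2) + Nk k
  have hd : ∀ k, 0 < d k := fun k => add_pos_of_nonneg_of_pos (by positivity) (hNk k)
  have htotal : ∀ k, (∑ i, ∑ j, ‖u k i j‖ ^ 2) + Nk k = (∑ j, ‖u k k j‖ ^ 2) + d k := fun k => by
    rw [← Finset.add_sum_erase _ _ (Finset.mem_univ k), add_assoc]
  have hF1 : ∀ ρ Γ, F1 ρ Γ = ∑ k, lagrangianDualTerm (ρ k)
      (2 * RCLike.re (∑ j, conj (Γ k j) * u k k j)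
        - ((∑ j, ‖u k k j‖ ^ 2) + d k) * ∑ j, ‖Γ k j‖ ^ 2) := fun ρ Γ => by
    simp only [F1, htotal]
    rfl
  have hle : ∀ ρ Γ, (∀ k, -1 < ρ k) → F1 ρ Γ ≤ Rd := fun ρ Γ hρ => by
    rw [hF1]
    exact Finset.sum_le_sum fun k _ => lagrangianDualTerm_quadratic_le_pi (hd k) (hρ k) _ _
  have heq : ∀ ρ Γ, (∀ k, -1 < ρ k) → (F1 ρ Γ = Rd ↔ ∀ k,
      (Γ k = fun j => u k k j / ((((∑ i, ∑ j, ‖u k i j‖ ^ 2) + Nk k : ℝ)) : ℂ)) ∧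
        ρ k = (∑ j, ‖u k k j‖ ^ 2) / d k) := fun ρ Γ hρ => by
    rw [hF1, Finset.sum_eq_sum_iff_of_le
      fun k _ => lagrangianDualTerm_quadratic_le_pi (hd k) (hρ k) _ _]
    simp only [Finset.mem_univ, true_implies, htotal,
      lagrangianDualTerm_quadratic_eq_iff_pi (hd _) (hρ _)]
    rfl
  have hρ₀ : ∀ k, -1 < (∑ j, ‖u k k j‖ ^ 2) / d k := fun k =>
    neg_one_lt_zero.trans_le (div_nonneg (by positivity) (hd k).le)
  exact ⟨hle, heq, _, _, hρ₀, (heq _ _ hρ₀).mpr fun k => ⟨rfl, rfl⟩⟩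
end
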